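/- arXiv:1309.4521 — 7 statements merged into one kernel-verified Lean document; each statement's English description precedes it below -/
import Mathlib

section
/- Let (V, L) be a q-uniform hypergraph in which any two vertices are contained in at most one hyperedge, and suppose every vertex lies in at least q hyperedges. Then for every set A of q vertices, the number of hyperedges intersecting A is at least q(q+1)/2, and in particular at least q^2/2. -/
/-!
Add the vertices of `A` one at a time. When the `(i+1)`-st vertex `a` is added, linearity
lets at most `i` of its hyperedges meet the `i` vertices already present, one per vertex,
so at least `q - i` of the `≥ q` hyperedges through `a` are new. Summing over `i < q` gives
`q + (q - 1) + ⋯ + 1 = q(q+1)/2`.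
-/

open Finset

section LinearHypergraph

variable {V : Type*} [DecidableEq V] (L : Finset (Finset V))

lemma card_filter_mem_and_meets_le
    (hlinear : ∀ u v : V, u ≠ v → #{e ∈ L | u ∈ e ∧ v ∈ e} ≤ 1)
    {a : V} {s : Finset V} (ha : a ∉ s) :
    #{e ∈ L | a ∈ e ∧ (e ∩ s).Nonempty} ≤ #s := by
  have hsub : {e ∈ L | a ∈ e ∧ (e ∩ s).Nonempty} ⊆ s.biUnion fun u => {e ∈ L | a ∈ e ∧ u ∈ e} := by
    intro e he
    obtain ⟨heL, hae, u, hu⟩ := mem_filter.1 he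
    exact mem_biUnion.2 ⟨u, (mem_inter.1 hu).2, mem_filter.2 ⟨heL, hae, (mem_inter.1 hu).1⟩⟩
  calc #{e ∈ L | a ∈ e ∧ (e ∩ s).Nonempty}
      ≤ #(s.biUnion fun u => {e ∈ L | a ∈ e ∧ u ∈ e}) := card_le_card hsub
    _ ≤ ∑ u ∈ s, #{e ∈ L | a ∈ e ∧ u ∈ e} := card_biUnion_le
    _ ≤ ∑ _u ∈ s, 1 := sum_le_sum fun u hu => hlinear a u (ne_of_mem_of_not_mem hu ha).symm
    _ = #s := by rw [sum_const, smul_eq_mul, mul_one]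

lemma card_filter_meets_insert (a : V) (s : Finset V) :
    #{e ∈ L | (e ∩ insert a s).Nonempty} =
      #{e ∈ L | (e ∩ s).Nonempty} + #{e ∈ L | a ∈ e ∧ ¬(e ∩ s).Nonempty} := by
  rw [← card_union_of_disjoint (disjoint_filter.2 fun _ _ hmeets h => h.2 hmeets)]
  congr 1
  ext e
  have hmeets : (e ∩ insert a s).Nonempty ↔ a ∈ e ∨ (e ∩ s).Nonempty := by
    simp only [Finset.Nonempty, mem_inter, mem_insert, and_or_left, exists_or, exists_eq_right]
  rw [mem_filter, mem_union, mem_filter, mem_filter, hmeets]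
  tauto

theorem sum_range_sub_le_card_filter_meets
    (hlinear : ∀ u v : V, u ≠ v → #{e ∈ L | u ∈ e ∧ v ∈ e} ≤ 1)
    {d : ℕ} (hdeg : ∀ v : V, d ≤ #{e ∈ L | v ∈ e}) (A : Finset V) :
    ∑ i ∈ range #A, (d - i) ≤ #{e ∈ L | (e ∩ A).Nonempty} := by
  induction A using Finset.induction_on with
  | empty => simp
  | @insert a s ha ih =>
    rw [card_insert_of_notMem ha, sum_range_succ, card_filter_meets_insert]
    have hsplit := card_filter_add_card_filter_not (s := {e ∈ L | a ∈ e}) fun e => (e ∩ s).Nonempty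
    simp only [filter_filter] at hsplit
    have hold := card_filter_mem_and_meets_le L hlinear ha
    have hnew := hdeg a
    omega

end LinearHypergraph

theorem two_mul_sum_range_sub (n : ℕ) : 2 * ∑ i ∈ range n, (n - i) = n * (n + 1) := by
  induction n with
  | zero => simp
  | succ n ih =>
    simp only [sum_range_succ', Nat.succ_sub_succ, Nat.sub_zero, mul_add, ih]
    ring

theorem stmt0_general {V : Type} [DecidableEq V] (q : ℕ)
    (L : Finset (Finset V))
    (hlinear : ∀ u v : V, u ≠ v → (L.filter (fun e => u ∈ e ∧ v ∈ e)).card ≤ 1)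
    (hdeg : ∀ v : V, q ≤ (L.filter (fun e => v ∈ e)).card) :
    ∀ A : Finset V, A.card = q →
      ((q : ℝ) * (q + 1)) / 2 ≤ ((L.filter (fun e => (e ∩ A).Nonempty)).card : ℝ) ∧
      (q : ℝ) ^ 2 / 2 ≤ ((L.filter (fun e => (e ∩ A).Nonempty)).card : ℝ) := by
  intro A hA
  have hsum := sum_range_sub_le_card_filter_meets L hlinear hdeg A
  rw [hA] at hsum
  have hnat : q * (q + 1) ≤ 2 * #{e ∈ L | (e ∩ A).Nonempty} := by
    rw [← two_mul_sum_range_sub]; omega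
  have hreal : ((q : ℝ) * (q + 1)) / 2 ≤ (#{e ∈ L | (e ∩ A).Nonempty} : ℝ) := by
    rw [div_le_iff₀ two_pos, mul_comm _ (2 : ℝ)]
    exact_mod_cast hnat
  refine ⟨hreal, le_trans ?_ hreal⟩
  rw [sq]
  gcongr
  linarith

/-- A `q`-uniform linear hypergraph in which every vertex has degree at least `q`:
every set `A` of `q` vertices meets at least `q(q+1)/2` hyperedges, in particular
at least `q²/2`. -/
theorem stmt0 {V : Type} [Fintype V] [DecidableEq V] (q : ℕ)
    (L : Finset (Finset V))
    (huniform : ∀ e ∈ L, e.card = q)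
    (hlinear : ∀ u v : V, u ≠ v → (L.filter (fun e => u ∈ e ∧ v ∈ e)).card ≤ 1)
    (hdeg : ∀ v : V, q ≤ (L.filter (fun e => v ∈ e)).card) :
    ∀ A : Finset V, A.card = q →
      ((q : ℝ) * (q + 1)) / 2 ≤ ((L.filter (fun e => (e ∩ A).Nonempty)).card : ℝ) ∧
      (q : ℝ) ^ 2 / 2 ≤ ((L.filter (fun e => (e ∩ A).Nonempty)).card : ℝ) :=
  stmt0_general q L hlinear hdeg
end

section
/- Let H = (V, L') be a hypergraph on a vertex set V of size q^2, where every hyperedge has size q, every vertex has degree at most 2α, and for every set A of q vertices at least αq/4 hyperedges intersect A. Then for every integer γ with 1 ≤ γ ≤ q/16 and every set B of 16γq vertices, the number of hyperedges L with |L ∩ B| ≥ γ is at least αq/8. -/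
/-!
Split `B` into `16γ` blocks of `q` vertices. Each block meets at least `αq/4` hyperedges, so the
auxiliary bipartite graph "hyperedge `L` meets block `A`" has at least `4γαq` edges. A hyperedge
meets at most `|L ∩ B|` blocks, hence at most `γ - 1` unless it is one of the `N` hyperedges with
`|L ∩ B| ≥ γ`, and at most all `16γ` blocks in any case. Double counting the degree condition
gives `|L'| ≤ 2αq`, so `4γαq ≤ 16γN + 2(γ - 1)αq`, i.e. `N ≥ αq/8`.
-/

open Finset

namespace Finpartition

variable {α : Type*} [DecidableEq α] {s : Finset α}

theorem exists_card_parts_eq_of_card_eq_mul {m q : ℕ} (hq : q ≠ 0) (hs : #s = m * q) :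
    ∃ P : Finpartition s, #P.parts = m ∧ ∀ A ∈ P.parts, #A = q := by
  have h : m * q + 0 * (q + 1) = #s := by rw [hs]; ring
  refine ⟨(⊥ : Finpartition s).equitabilise h, card_parts_equitabilise _ h hq, fun A hA => ?_⟩
  refine (card_eq_of_mem_parts_equitabilise hA).resolve_right fun hbig => ?_
  have hnone := card_filter_equitabilise_big (⊥ : Finpartition s) h
  exact (card_pos.2 ⟨A, mem_filter.2 ⟨hA, hbig⟩⟩).ne' hnone

theorem card_filter_inter_nonempty_le (P : Finpartition s) (t : Finset α) :
    #{A ∈ P.parts | (t ∩ A).Nonempty} ≤ #(t ∩ s) :=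
  calc #{A ∈ P.parts | (t ∩ A).Nonempty}
      ≤ #({A ∈ P.parts | (t ∩ A).Nonempty}.biUnion (t ∩ ·)) :=
        card_le_card_biUnion
          (fun _ hA _ hB hAB => (P.disjoint (mem_filter.1 hA).1 (mem_filter.1 hB).1 hAB).mono
            inter_subset_right inter_subset_right)
          fun _ hA => (mem_filter.1 hA).2
    _ ≤ #(t ∩ s) :=
        card_le_card <| biUnion_subset.2 fun _ hA =>
          inter_subset_inter_left (P.le (mem_filter.1 hA).1)

theorem sum_card_filter_inter_nonempty_le (P : Finpartition s) (L : Finset (Finset α)) (γ : ℕ) :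
    ∑ A ∈ P.parts, #{e ∈ L | (e ∩ A).Nonempty}
      ≤ #P.parts * #{e ∈ L | γ ≤ #(e ∩ s)} + (γ - 1) * #L := by
  have hswap := sum_card_bipartiteAbove_eq_sum_card_bipartiteBelow
    (fun (e : Finset α) (A : Finset α) => (e ∩ A).Nonempty) (s := L) (t := P.parts)
  simp only [bipartiteAbove, bipartiteBelow] at hswap
  rw [← hswap]
  calc ∑ e ∈ L, #{A ∈ P.parts | (e ∩ A).Nonempty}
      ≤ ∑ e ∈ L, if γ ≤ #(e ∩ s) then #P.parts else γ - 1 := by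
        gcongr with e
        split_ifs with he
        · exact card_filter_le _ _
        · have := P.card_filter_inter_nonempty_le e
          omega
    _ = #P.parts * #{e ∈ L | γ ≤ #(e ∩ s)} + (γ - 1) * #{e ∈ L | ¬γ ≤ #(e ∩ s)} := by
        rw [sum_ite, sum_const, sum_const, smul_eq_mul, smul_eq_mul, mul_comm, mul_comm (γ - 1)]
    _ ≤ #P.parts * #{e ∈ L | γ ≤ #(e ∩ s)} + (γ - 1) * #L := by
        gcongr
        exact filter_subset _ _

end Finpartition

theorem Finset.card_mul_le_card_mul_of_degree_le {V : Type*} [Fintype V] [DecidableEq V]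
    {L : Finset (Finset V)} {q : ℕ} {d : ℝ} (hsize : ∀ e ∈ L, #e = q)
    (hdeg : ∀ v : V, (#{e ∈ L | v ∈ e} : ℝ) ≤ d) :
    (#L : ℝ) * q ≤ Fintype.card V * d := by
  have := card_nsmul_le_card_nsmul (R := ℝ) (fun (e : Finset V) (v : V) => v ∈ e)
    (s := L) (t := univ) (m := q) (n := d)
    (fun e he => by simp [bipartiteAbove, hsize e he]) (fun v _ => hdeg v)
  simpa [nsmul_eq_mul] using this

/-- If `H = (V, L')` is a hypergraph on `q²` vertices with all hyperedges of size `q`,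
all vertex degrees at most `2α`, and every `q`-set of vertices meets at least `αq/4`
hyperedges, then for every `1 ≤ γ ≤ q/16` and every set `B` of `16γq` vertices,
at least `αq/8` hyperedges `L` satisfy `|L ∩ B| ≥ γ`. -/
theorem stmt3 {V : Type} [Fintype V] [DecidableEq V] (q : ℕ) (α : ℝ) (hα : 0 < α)
    (L' : Finset (Finset V))
    (hV : Fintype.card V = q ^ 2)
    (hsize : ∀ e ∈ L', e.card = q)
    (hdeg : ∀ v : V, ((L'.filter (fun e => v ∈ e)).card : ℝ) ≤ 2 * α)
    (hA : ∀ A : Finset V, A.card = q →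
      α * q / 4 ≤ ((L'.filter (fun e => (e ∩ A).Nonempty)).card : ℝ)) :
    ∀ γ : ℕ, 1 ≤ γ → (γ : ℝ) ≤ (q : ℝ) / 16 →
      ∀ B : Finset V, B.card = 16 * γ * q →
        α * q / 8 ≤ ((L'.filter (fun e => γ ≤ (e ∩ B).card)).card : ℝ) := by
  intro γ hγ hγq B hB
  have hγ' : (1 : ℝ) ≤ γ := Nat.one_le_cast.2 hγ
  have hq : (0 : ℝ) < q := by linarith
  obtain ⟨P, hPcard, hPparts⟩ :=
    Finpartition.exists_card_parts_eq_of_card_eq_mul (Nat.cast_pos.1 hq).ne' hB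
  have hL' : (#L' : ℝ) ≤ 2 * α * q := by
    have := card_mul_le_card_mul_of_degree_le hsize hdeg
    rw [hV, Nat.cast_pow] at this
    nlinarith
  have hlow : (16 * γ : ℝ) * (α * q / 4) ≤ ∑ A ∈ P.parts, (#{e ∈ L' | (e ∩ A).Nonempty} : ℝ) := by
    have := card_nsmul_le_sum P.parts _ _ fun A hA' => hA A (hPparts A hA')
    rwa [hPcard, nsmul_eq_mul, Nat.cast_mul, Nat.cast_ofNat] at this
  have hup : (∑ A ∈ P.parts, (#{e ∈ L' | (e ∩ A).Nonempty} : ℝ))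
      ≤ 16 * γ * #{e ∈ L' | γ ≤ #(e ∩ B)} + (γ - 1) * #L' := by
    have := P.sum_card_filter_inter_nonempty_le L' γ
    rw [hPcard] at this
    exact_mod_cast this
  nlinarith [mul_pos hα hq]
end

section
/- Let G be a graph constructed as follows: V(G) = V, and there is a linear hypergraph (V, L') (any two vertices lie in at most one hyperedge) such that for each hyperedge L ∈ L', G[L] is a complete s-partite graph, and every edge of G lies inside some hyperedge. Suppose additionally every vertex of the hypergraph has degree at most 2α and each hyperedge has at most q vertices. Then every edge xy of G lies in at most 4α²·(4α² + 2α)^{s−2} copies of K_{s+1}. -/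
/-!
Let `L` be the hyperedge through the edge `xy`. Since `G[L]` is `s`-partite, every `K_{s+1}`
through `xy` has a vertex `v ∉ L`, and `v` is collinear with both `x` and `y`. Such a `v` is pinned
down by the pair of lines `(xv, yv)`, so there are at most `deg x · deg y ≤ 4α²` of them. The
remaining `s - 2` vertices of the clique are again collinear with `x` and `y` if they lie outside
`L`, and collinear with `v` if they lie in `L`; a line through `v` meets `L` at most once, so these
vertices are chosen from a set of size at most `4α² + 2α`.
-/

open Finset

namespace Hypergraph

variable {V : Type*} [DecidableEq V] {H : Finset (Finset V)} {L e f : Finset V} {v w x y : V}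

def IsLinear (H : Finset (Finset V)) : Prop :=
  ∀ u v : V, u ≠ v → (H.filter fun e => u ∈ e ∧ v ∈ e).card ≤ 1

theorem IsLinear.eq_of_mem_of_mem (hH : IsLinear H) (he : e ∈ H) (hf : f ∈ H) (hxy : x ≠ y)
    (hxe : x ∈ e) (hye : y ∈ e) (hxf : x ∈ f) (hyf : y ∈ f) : e = f :=
  card_le_one.1 (hH x y hxy) e (by simp [he, hxe, hye]) f (by simp [hf, hxf, hyf])

theorem IsLinear.card_inter_le_one (hH : IsLinear H) (he : e ∈ H) (hf : f ∈ H) (hef : e ≠ f) :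
    (e ∩ f).card ≤ 1 :=
  card_le_one.2 fun x hx y hy => by
    by_contra hxy
    rw [mem_inter] at hx hy
    exact hef (hH.eq_of_mem_of_mem he hf hxy hx.1 hy.1 hx.2 hy.2)

def collinearOutside (H : Finset (Finset V)) (L : Finset V) (x y : V) : Finset V :=
  ((H.filter fun e => x ∈ e) ×ˢ (H.filter fun e => y ∈ e)).biUnion fun p => (p.1 ∩ p.2) \ L

def collinearIn (H : Finset (Finset V)) (L : Finset V) (v : V) : Finset V :=
  (H.filter fun e => v ∈ e).biUnion fun e => e ∩ L

theorem notMem_of_mem_collinearOutside (hv : v ∈ collinearOutside H L x y) : v ∉ L := by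
  simp only [collinearOutside, mem_biUnion, mem_sdiff] at hv
  obtain ⟨_, _, _, hvL⟩ := hv
  exact hvL

theorem card_collinearOutside_le (hH : IsLinear H) (hL : L ∈ H) (hxy : x ≠ y) (hx : x ∈ L)
    (hy : y ∈ L) :
    (collinearOutside H L x y).card ≤
      (H.filter fun e => x ∈ e).card * (H.filter fun e => y ∈ e).card := by
  refine (card_biUnion_le_card_mul _ _ 1 fun p hp => ?_).trans_eq (by rw [mul_one, card_product])
  simp only [mem_product, mem_filter] at hp
  obtain ⟨⟨he, hxe⟩, hf, hyf⟩ := hp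
  by_cases hef : p.1 = p.2
  · have heL : p.1 = L := hH.eq_of_mem_of_mem he hL hxy hxe (hef ▸ hyf) hx hy
    simp [← hef, heL]
  · exact (card_le_card sdiff_subset).trans (hH.card_inter_le_one he hf hef)

theorem card_collinearIn_le (hH : IsLinear H) (hL : L ∈ H) (hv : v ∉ L) :
    (collinearIn H L v).card ≤ (H.filter fun e => v ∈ e).card := by
  refine (card_biUnion_le_card_mul _ _ 1 fun e he => ?_).trans_eq (mul_one _)
  rw [mem_filter] at he
  exact hH.card_inter_le_one he.1 hL (by rintro rfl; exact hv he.2)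

section Graph

variable {G : SimpleGraph V}

theorem mem_collinearOutside_of_adj (hG : ∀ a b, G.Adj a b → ∃ e ∈ H, a ∈ e ∧ b ∈ e)
    (hxw : G.Adj x w) (hyw : G.Adj y w) (hw : w ∉ L) : w ∈ collinearOutside H L x y := by
  obtain ⟨e, he, hxe, hwe⟩ := hG x w hxw
  obtain ⟨f, hf, hyf, hwf⟩ := hG y w hyw
  simp only [collinearOutside, mem_biUnion, mem_product, mem_filter, mem_sdiff, mem_inter]
  exact ⟨(e, f), ⟨⟨he, hxe⟩, hf, hyf⟩, ⟨hwe, hwf⟩, hw⟩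

theorem mem_collinearIn_of_adj (hG : ∀ a b, G.Adj a b → ∃ e ∈ H, a ∈ e ∧ b ∈ e)
    (hvw : G.Adj v w) (hw : w ∈ L) : w ∈ collinearIn H L v := by
  obtain ⟨e, he, hve, hwe⟩ := hG v w hvw
  simp only [collinearIn, mem_biUnion, mem_filter, mem_inter]
  exact ⟨e, ⟨he, hve⟩, hwe, hw⟩

theorem exists_mem_notMem_of_isNClique {s : ℕ} {χ : V → Fin s}
    (hχ : ∀ a ∈ L, ∀ b ∈ L, G.Adj a b → χ a ≠ χ b) {T : Finset V}
    (hT : G.IsNClique (s + 1) T) : ∃ v ∈ T, v ∉ L := by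
  by_contra! hTL
  obtain ⟨a, ha, b, hb, hab, hχab⟩ :=
    exists_ne_map_eq_of_card_lt_of_maps_to (s := T) (t := univ) (f := χ) (by simp [hT.card_eq])
      fun a _ => mem_coe.2 (mem_univ (χ a))
  exact hχ a (hTL a ha) b (hTL b hb) (hT.isClique ha hb hab) hχab

theorem cliques_subset_biUnion (hG : ∀ a b, G.Adj a b → ∃ e ∈ H, a ∈ e ∧ b ∈ e) {s : ℕ}
    {χ : V → Fin s} (hχ : ∀ a ∈ L, ∀ b ∈ L, G.Adj a b → χ a ≠ χ b) (hxy : x ≠ y) (hx : x ∈ L)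
    (hy : y ∈ L) :
    {T : Finset V | G.IsNClique (s + 1) T ∧ x ∈ T ∧ y ∈ T} ⊆
      ↑((collinearOutside H L x y).biUnion fun v =>
        ((collinearOutside H L x y ∪ collinearIn H L v).powersetCard (s - 2)).image
          fun R => R ∪ {x, y, v}) := by
  rintro T ⟨hT, hxT, hyT⟩
  obtain ⟨v, hvT, hvL⟩ := exists_mem_notMem_of_isNClique hχ hT
  have hadj : ∀ {a b}, a ∈ T → b ∈ T → a ≠ b → G.Adj a b := fun ha hb hab =>
    hT.isClique ha hb hab
  have hxv : x ≠ v := by rintro rfl; exact hvL hx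
  have hyv : y ≠ v := by rintro rfl; exact hvL hy
  have hsub : {x, y, v} ⊆ T := by simp [insert_subset_iff, hxT, hyT, hvT]
  have hcard : ({x, y, v} : Finset V).card = 3 := card_eq_three.2 ⟨x, y, v, hxy, hxv, hyv, rfl⟩
  simp only [coe_biUnion, Set.mem_iUnion, coe_image, Set.mem_image, mem_coe, mem_powersetCard]
  refine ⟨v, mem_collinearOutside_of_adj hG (hadj hxT hvT hxv) (hadj hyT hvT hyv) hvL,
    T \ {x, y, v}, ⟨fun w hw => ?_, ?_⟩, sdiff_union_of_subset hsub⟩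
  · simp only [mem_sdiff, mem_insert, mem_singleton, not_or] at hw
    obtain ⟨hwT, hwx, hwy, hwv⟩ := hw
    by_cases hwL : w ∈ L
    · exact mem_union_right _ (mem_collinearIn_of_adj hG (hadj hvT hwT (Ne.symm hwv)) hwL)
    · exact mem_union_left _ (mem_collinearOutside_of_adj hG (hadj hxT hwT (Ne.symm hwx))
        (hadj hyT hwT (Ne.symm hwy)) hwL)
  · rw [card_sdiff_of_subset hsub, hT.card_eq, hcard]
    omega

theorem ncard_cliques_le (hG : ∀ a b, G.Adj a b → ∃ e ∈ H, a ∈ e ∧ b ∈ e) {s : ℕ}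
    {χ : V → Fin s} (hχ : ∀ a ∈ L, ∀ b ∈ L, G.Adj a b → χ a ≠ χ b) (hxy : x ≠ y) (hx : x ∈ L)
    (hy : y ∈ L) :
    {T : Finset V | G.IsNClique (s + 1) T ∧ x ∈ T ∧ y ∈ T}.ncard ≤
      ∑ v ∈ collinearOutside H L x y,
        (collinearOutside H L x y ∪ collinearIn H L v).card ^ (s - 2) := by
  refine (Set.ncard_le_ncard (cliques_subset_biUnion hG hχ hxy hx hy)).trans ?_
  rw [Set.ncard_coe_finset]
  refine card_biUnion_le.trans (sum_le_sum fun v _ => card_image_le.trans ?_)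
  rw [card_powersetCard]
  exact Nat.choose_le_pow _ _

end Graph

end Hypergraph

open Hypergraph in
theorem stmt5_general {V : Type} [DecidableEq V] (s : ℕ)
    (α : ℝ)
    (G : SimpleGraph V) (L' : Finset (Finset V))
    (hlinear : ∀ u v : V, u ≠ v → (L'.filter (fun e => u ∈ e ∧ v ∈ e)).card ≤ 1)
    (hpartite : ∀ L ∈ L', ∃ χ : V → Fin s, ∀ x ∈ L, ∀ y ∈ L, (G.Adj x y ↔ χ x ≠ χ y))
    (hedge : ∀ x y : V, G.Adj x y → ∃ L ∈ L', x ∈ L ∧ y ∈ L)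
    (hdeg : ∀ v : V, ((L'.filter (fun e => v ∈ e)).card : ℝ) ≤ 2 * α) :
    ∀ x y : V, G.Adj x y →
      (({T : Finset V | G.IsNClique (s + 1) T ∧ x ∈ T ∧ y ∈ T}.ncard : ℝ))
        ≤ 4 * α ^ 2 * (4 * α ^ 2 + 2 * α) ^ (s - 2) := by
  intro x y hxy
  obtain ⟨L, hL, hxL, hyL⟩ := hedge x y hxy
  obtain ⟨χ, hχ⟩ := hpartite L hL
  have hα : 0 ≤ α := by linarith [hdeg x, Nat.cast_nonneg (α := ℝ) (L'.filter fun e => x ∈ e).card]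
  set C := collinearOutside L' L x y
  have hC : (C.card : ℝ) ≤ 4 * α ^ 2 := calc
    (C.card : ℝ) ≤ (L'.filter fun e => x ∈ e).card * (L'.filter fun e => y ∈ e).card := by
        exact_mod_cast card_collinearOutside_le hlinear hL hxy.ne hxL hyL
    _ ≤ (2 * α) * (2 * α) := mul_le_mul (hdeg x) (hdeg y) (by positivity) (by positivity)
    _ = 4 * α ^ 2 := by ring
  have hS (v) (hv : v ∈ C) : ((C ∪ collinearIn L' L v).card : ℝ) ≤ 4 * α ^ 2 + 2 * α := calc
    _ ≤ (C.card : ℝ) + (collinearIn L' L v).card := by exact_mod_cast card_union_le _ _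
    _ ≤ _ := add_le_add hC ((Nat.cast_le.2 (card_collinearIn_le hlinear hL
        (notMem_of_mem_collinearOutside hv))).trans (hdeg v))
  calc _ ≤ ∑ v ∈ C, ((C ∪ collinearIn L' L v).card : ℝ) ^ (s - 2) := by
        exact_mod_cast ncard_cliques_le hedge (fun a ha b hb => (hχ a ha b hb).1) hxy.ne hxL hyL
    _ ≤ ∑ v ∈ C, (4 * α ^ 2 + 2 * α) ^ (s - 2) := by gcongr with v hv; exact hS v hv
    _ = C.card * (4 * α ^ 2 + 2 * α) ^ (s - 2) := by rw [sum_const, nsmul_eq_mul]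
    _ ≤ _ := by gcongr

/-- Let `G` be a graph whose edges all lie inside hyperedges of a linear hypergraph
`L'` in which every vertex has degree at most `2α` and every hyperedge has at most
`q` vertices, and such that `G` restricted to each hyperedge is complete `s`-partite.
Then every edge of `G` lies in at most `4α²·(4α² + 2α)^{s−2}` copies of `K_{s+1}`. -/
theorem stmt5 {V : Type} [Fintype V] [DecidableEq V] (s q : ℕ) (hs : 3 ≤ s)
    (α : ℝ) (hα : 1 ≤ α)
    (G : SimpleGraph V) (L' : Finset (Finset V))
    (hlinear : ∀ u v : V, u ≠ v → (L'.filter (fun e => u ∈ e ∧ v ∈ e)).card ≤ 1)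
    (hpartite : ∀ L ∈ L', ∃ χ : V → Fin s, ∀ x ∈ L, ∀ y ∈ L, (G.Adj x y ↔ χ x ≠ χ y))
    (hedge : ∀ x y : V, G.Adj x y → ∃ L ∈ L', x ∈ L ∧ y ∈ L)
    (hdeg : ∀ v : V, ((L'.filter (fun e => v ∈ e)).card : ℝ) ≤ 2 * α)
    (hsize : ∀ e ∈ L', e.card ≤ q) :
    ∀ x y : V, G.Adj x y →
      (({T : Finset V | G.IsNClique (s + 1) T ∧ x ∈ T ∧ y ∈ T}.ncard : ℝ))
        ≤ 4 * α ^ 2 * (4 * α ^ 2 + 2 * α) ^ (s - 2) :=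
  stmt5_general s α G L' hlinear hpartite hedge hdeg
end

section
/- Let (V, L') be a linear hypergraph (any two points lie in at most one line), and let G be a graph on V such that every edge of G lies within some line of L', and for every line L, the induced graph G[L] contains no K_{s+1}, where s ≥ 4. Then every copy of K_{s+2} in G contains 4 vertices in general position, i.e., 4 vertices no 3 of which lie on a common line. -/
/-!
If no line meets the clique `K` in three points, any four vertices of `K` will do. Otherwise
some line `L` meets `K` in at least three points; since `G[L]` is `K_{s+1}`-free, it meets `K` in
at most `s` points, so two vertices `a, b` of `K` lie off `L`. The edge `ab` lies on a line `M ≠ L`,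
which shares at most one point with `L`, so two vertices `x, y` of `K ∩ L` lie off `M`. A line
through two of `x, y` is `L` and a line through `a, b` is `M`, so `{x, y, a, b}` is in general
position.
-/

open Finset

section

variable {V : Type*} [DecidableEq V]

def IsLinear (L' : Finset (Finset V)) : Prop :=
  ∀ u v : V, u ≠ v → #(L'.filter (fun e => u ∈ e ∧ v ∈ e)) ≤ 1

def InGeneralPosition (L' : Finset (Finset V)) (S : Finset V) : Prop :=
  ∀ N ∈ L', #(S ∩ N) ≤ 2

theorem InGeneralPosition.mono {L' : Finset (Finset V)} {S T : Finset V}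
    (hT : InGeneralPosition L' T) (hST : S ⊆ T) : InGeneralPosition L' S :=
  fun N hN => (card_le_card (inter_subset_inter_right hST)).trans (hT N hN)

theorem SimpleGraph.IsClique.card_inter_lt {G : SimpleGraph V} {K L : Finset V} {n : ℕ}
    (hK : G.IsClique (K : Set V)) (hL : ∀ T ⊆ L, ¬ G.IsNClique n T) : #(K ∩ L) < n := by
  by_contra! h
  obtain ⟨T, hT, hTn⟩ := exists_subset_card_eq h
  exact hL T (hT.trans inter_subset_right)
    ⟨hK.subset (coe_subset.2 (hT.trans inter_subset_left)), hTn⟩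

namespace IsLinear

variable {L' : Finset (Finset V)} {L M N : Finset V}

theorem eq_of_two_le_card_inter (hL' : IsLinear L') (hL : L ∈ L') (hN : N ∈ L')
    (h2 : 2 ≤ #(L ∩ N)) : L = N := by
  obtain ⟨u, hu, v, hv, huv⟩ := one_lt_card.1 h2
  rw [mem_inter] at hu hv
  exact card_le_one.1 (hL' u v huv) L (mem_filter.2 ⟨hL, hu.1, hv.1⟩)
    N (mem_filter.2 ⟨hN, hu.2, hv.2⟩)

theorem card_inter_le_one (hL' : IsLinear L') (hL : L ∈ L') (hM : M ∈ L') (hLM : L ≠ M) :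
    #(L ∩ M) ≤ 1 := by
  by_contra! h
  exact hLM (hL'.eq_of_two_le_card_inter hL hM h)

theorem disjoint_of_two_le_card_inter {P Q : Finset V} (hL' : IsLinear L') (hL : L ∈ L')
    (hN : N ∈ L') (hPL : P ⊆ L) (hQL : Disjoint Q L) (h2 : 2 ≤ #(P ∩ N)) : Disjoint Q N := by
  have hLN : L = N :=
    hL'.eq_of_two_le_card_inter hL hN (h2.trans (card_le_card (inter_subset_inter_right hPL)))
  exact hLN ▸ hQL

theorem inGeneralPosition_union {P Q : Finset V} (hL' : IsLinear L') (hL : L ∈ L')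
    (hM : M ∈ L') (hPL : P ⊆ L) (hPM : Disjoint P M) (hQM : Q ⊆ M) (hQL : Disjoint Q L)
    (hP : #P ≤ 2) (hQ : #Q ≤ 2) : InGeneralPosition L' (P ∪ Q) := by
  intro N hN
  have hunion : #((P ∪ Q) ∩ N) ≤ #(P ∩ N) + #(Q ∩ N) := by
    rw [union_inter_distrib_right]
    exact card_union_le _ _
  have hPN : #(P ∩ N) ≤ #P := card_le_card inter_subset_left
  have hQN : #(Q ∩ N) ≤ #Q := card_le_card inter_subset_left
  by_cases hP2 : 2 ≤ #(P ∩ N)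
  · have := hL'.disjoint_of_two_le_card_inter hL hN hPL hQL hP2
    rw [disjoint_iff_inter_eq_empty.1 this, card_empty] at hunion
    omega
  by_cases hQ2 : 2 ≤ #(Q ∩ N)
  · have := hL'.disjoint_of_two_le_card_inter hM hN hQM hPM hQ2
    rw [disjoint_iff_inter_eq_empty.1 this, card_empty] at hunion
    omega
  omega

theorem exists_inGeneralPosition_of_isClique {G : SimpleGraph V} {K : Finset V}
    (hL' : IsLinear L') (hedge : ∀ x y : V, G.Adj x y → ∃ M ∈ L', x ∈ M ∧ y ∈ M)
    (hK : G.IsClique (K : Set V)) (hL : L ∈ L') (h3 : 3 ≤ #(K ∩ L)) (h2 : 2 ≤ #(K \ L)) :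
    ∃ S ⊆ K, #S = 4 ∧ InGeneralPosition L' S := by
  obtain ⟨Q, hQ, hQ2⟩ := exists_subset_card_eq h2
  obtain ⟨a, b, hab, rfl⟩ := card_eq_two.1 hQ2
  have haK : a ∈ K := (mem_sdiff.1 (hQ (by simp))).1
  have hbK : b ∈ K := (mem_sdiff.1 (hQ (by simp))).1
  have hQL : Disjoint {a, b} L := disjoint_of_subset_left hQ sdiff_disjoint
  obtain ⟨M, hM, haM, hbM⟩ := hedge a b (hK haK hbK hab)
  have hLM : L ≠ M := by
    rintro rfl
    exact disjoint_left.1 hQL (mem_insert_self a {b}) haM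
  have hKLM : #((K ∩ L) ∩ M) ≤ 1 :=
    (card_le_card (inter_subset_inter_right inter_subset_right)).trans
      (hL'.card_inter_le_one hL hM hLM)
  have hoff : 2 ≤ #((K ∩ L) \ M) := by
    have := card_sdiff_add_card_inter (K ∩ L) M
    omega
  obtain ⟨P, hP, hP2⟩ := exists_subset_card_eq hoff
  have hPL : P ⊆ L := hP.trans (sdiff_subset.trans inter_subset_right)
  refine ⟨P ∪ {a, b}, union_subset (hP.trans (sdiff_subset.trans inter_subset_left)) ?_, ?_,
    hL'.inGeneralPosition_union hL hM hPL (disjoint_of_subset_left hP sdiff_disjoint) ?_ hQL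
      hP2.le hQ2.le⟩
  · simp [insert_subset_iff, haK, hbK]
  · rw [card_union_of_disjoint (disjoint_of_subset_left hPL hQL.symm), hP2, hQ2]
  · simp [insert_subset_iff, haM, hbM]

end IsLinear

end

/-- If every edge of `G` lies inside a line of a linear hypergraph `L'` and `G`
restricted to each line is `K_{s+1}`-free (`s ≥ 4`), then every copy of `K_{s+2}`
in `G` contains 4 vertices in general position (no 3 on a common line). -/
theorem stmt6 {V : Type} [DecidableEq V] (s : ℕ) (hs : 4 ≤ s)
    (G : SimpleGraph V) (L' : Finset (Finset V))
    (hlinear : ∀ u v : V, u ≠ v → (L'.filter (fun e => u ∈ e ∧ v ∈ e)).card ≤ 1)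
    (hedge : ∀ x y : V, G.Adj x y → ∃ L ∈ L', x ∈ L ∧ y ∈ L)
    (hLfree : ∀ L ∈ L', ∀ T : Finset V, T ⊆ L → ¬ G.IsNClique (s + 1) T) :
    ∀ K : Finset V, G.IsNClique (s + 2) K →
      ∃ v₁ ∈ K, ∃ v₂ ∈ K, ∃ v₃ ∈ K, ∃ v₄ ∈ K,
        ({v₁, v₂, v₃, v₄} : Finset V).card = 4 ∧
        ∀ L ∈ L', (({v₁, v₂, v₃, v₄} : Finset V) ∩ L).card ≤ 2 := by
  intro K hK
  suffices ∃ S ⊆ K, #S = 4 ∧ InGeneralPosition L' S by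
    obtain ⟨S, hSK, hS4, hS⟩ := this
    obtain ⟨v₁, v₂, v₃, v₄, -, -, -, -, -, -, rfl⟩ := card_eq_four.1 hS4
    exact ⟨v₁, hSK (by simp), v₂, hSK (by simp), v₃, hSK (by simp), v₄, hSK (by simp), hS4, hS⟩
  by_cases hcase : ∃ L ∈ L', 3 ≤ #(K ∩ L)
  · obtain ⟨L, hL, h3⟩ := hcase
    have hKL : #(K ∩ L) < s + 1 := hK.isClique.card_inter_lt (hLfree L hL)
    have hoff : 2 ≤ #(K \ L) := by
      have := card_sdiff_add_card_inter K L
      have := hK.card_eq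
      omega
    exact IsLinear.exists_inGeneralPosition_of_isClique hlinear hedge hK.isClique hL h3 hoff
  · push Not at hcase
    obtain ⟨S, hSK, hS4⟩ := exists_subset_card_eq (show 4 ≤ #K by rw [hK.card_eq]; omega)
    exact ⟨S, hSK, hS4, InGeneralPosition.mono (fun N hN => by have := hcase N hN; omega) hSK⟩
end

section
/- Let q be a sufficiently large prime and α = (log q)². Keep each line of the affine-plane-derived hypergraph (V, L) on q² vertices independently with probability α/q. Then with probability 1 − o(1), for every set A of q vertices, at least αq/4 of the retained lines intersect A. -/
/-! In a linear hypergraph in which every vertex has degree `q`, a set `A` of `q` vertices meets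
at least `q² / 2` lines: the sizes of the traces of the lines on `A` sum to `q²`, their squares sum
to at most `2 q²` because two points share at most one line, and Cauchy–Schwarz compares the two.

A line is retained with probability `p = α / q`. For the number `X` of retained lines among a set
`S` of lines, Markov's inequality for `2^{-X}` gives `P(X < N) ≤ 2^N (1 - p/2)^{|S|}
≤ exp (N log 2 - p |S| / 2)`, i.e. `exp ((αq/4 + 1) log 2 - αq/4)` for `N ≈ αq/4` and
`|S| ≥ q²/2`. The union bound over the `C(q², q) ≤ exp (2 q log q)` sets `A` still wins, since
`(1 - log 2) αq/4 = (1 - log 2) q (log q)² / 4` beats `2 q log q` once `log q ≥ 40`. -/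

open MeasureTheory ProbabilityTheory Finset
open scoped ENNReal NNReal

set_option linter.deprecated false

namespace Finset

variable {α : Type*} [DecidableEq α] {s : Finset α} {B : Finset (Finset α)} {n : ℕ}

theorem sum_card_offDiag_inter_le
    (hlin : ∀ a ∈ s, ∀ a' ∈ s, a ≠ a' → #{b ∈ B | a ∈ b ∧ a' ∈ b} ≤ 1) :
    ∑ t ∈ B, #(s ∩ t).offDiag ≤ #s.offDiag := by
  calc ∑ t ∈ B, #(s ∩ t).offDiag
      = ∑ x ∈ s.offDiag, #{b ∈ B | x.1 ∈ b ∧ x.2 ∈ b} := by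
        simp_rw [card_eq_sum_ones, sum_filter]
        rw [sum_comm]
        refine sum_congr rfl fun t _ => ?_
        rw [← sum_filter]
        congr 1
        ext ⟨a, a'⟩
        simp only [mem_offDiag, mem_inter, mem_filter]
        tauto
    _ ≤ ∑ _x ∈ s.offDiag, 1 := sum_le_sum fun x hx => by
        obtain ⟨ha, ha', hne⟩ := mem_offDiag.1 hx
        exact hlin _ ha _ ha' hne
    _ = #s.offDiag := (card_eq_sum_ones _).symm

theorem sq_card_mul_le_card_filter_inter_nonempty_mul (hdeg : ∀ a ∈ s, #{b ∈ B | a ∈ b} = n)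
    (hlin : ∀ a ∈ s, ∀ a' ∈ s, a ≠ a' → #{b ∈ B | a ∈ b ∧ a' ∈ b} ≤ 1) :
    (#s * n) ^ 2 ≤ #{t ∈ B | (s ∩ t).Nonempty} * (#s * n + #s.offDiag) := by
  set S := {t ∈ B | (s ∩ t).Nonempty}
  have hsum : ∑ t ∈ S, #(s ∩ t) = #s * n := by
    rw [sum_filter_of_ne fun t _ ht => card_pos.1 (Nat.pos_of_ne_zero ht), sum_card_inter hdeg]
  have hsum_sq : ∑ t ∈ S, #(s ∩ t) ^ 2 ≤ #s * n + #s.offDiag := by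
    have hsq : ∀ u : Finset α, #u ^ 2 = #u + #u.offDiag := fun u => by
      rw [offDiag_card, sq]
      have := Nat.le_mul_self #u
      omega
    calc ∑ t ∈ S, #(s ∩ t) ^ 2 ≤ ∑ t ∈ B, #(s ∩ t) ^ 2 :=
          sum_le_sum_of_subset (filter_subset _ _)
      _ = ∑ t ∈ B, #(s ∩ t) + ∑ t ∈ B, #(s ∩ t).offDiag := by
          simp_rw [hsq, sum_add_distrib]
      _ ≤ #s * n + #s.offDiag := by
          rw [sum_card_inter hdeg]
          gcongr
          exact sum_card_offDiag_inter_le hlin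
  calc (#s * n) ^ 2 = (∑ t ∈ S, #(s ∩ t)) ^ 2 := by rw [hsum]
    _ ≤ #S * ∑ t ∈ S, #(s ∩ t) ^ 2 := sq_sum_le_card_mul_sum_sq
    _ ≤ #S * (#s * n + #s.offDiag) := Nat.mul_le_mul_left _ hsum_sq

theorem sq_le_two_mul_card_filter_inter_nonempty (hs : #s = n)
    (hdeg : ∀ a ∈ s, #{b ∈ B | a ∈ b} = n)
    (hlin : ∀ a ∈ s, ∀ a' ∈ s, a ≠ a' → #{b ∈ B | a ∈ b ∧ a' ∈ b} ≤ 1) :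
    n ^ 2 ≤ 2 * #{t ∈ B | (s ∩ t).Nonempty} := by
  have h := sq_card_mul_le_card_filter_inter_nonempty_mul hdeg hlin
  rw [offDiag_card, hs] at h
  rcases Nat.eq_zero_or_pos n with rfl | hn
  · simp
  have : n * n * (n * n) ≤ n * n * (2 * #{t ∈ B | (s ∩ t).Nonempty}) :=
    calc n * n * (n * n) ≤ #{t ∈ B | (s ∩ t).Nonempty} * (n * n + (n * n - n)) := by
          rw [← sq]; exact h
      _ ≤ #{t ∈ B | (s ∩ t).Nonempty} * (2 * (n * n)) := by gcongr; omega
      _ = n * n * (2 * #{t ∈ B | (s ∩ t).Nonempty}) := by ring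
  rw [sq]
  exact Nat.le_of_mul_le_mul_left this (by positivity)

end Finset

theorem PMF.lintegral_toMeasure_bernoulli (p : ℝ≥0) (hp : p ≤ 1) (f : Bool → ℝ≥0∞) :
    ∫⁻ b, f b ∂(PMF.bernoulli p hp).toMeasure = f true * p + f false * (1 - p) := by
  rw [lintegral_fintype, Fintype.sum_bool]
  simp [PMF.bernoulli_apply, ENNReal.coe_sub]

theorem measure_pi_bernoulli_card_filter_lt_le {ι : Type*} [Fintype ι] (p : ℝ≥0) (hp : p ≤ 1)
    (S : Finset ι) (N : ℕ) :
    Measure.pi (fun _ : ι => (PMF.bernoulli p hp).toMeasure) {f | #{i ∈ S | f i = true} < N}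
      ≤ 2 ^ N * (1 - p / 2) ^ #S := by
  set μ := Measure.pi (fun _ : ι => (PMF.bernoulli p hp).toMeasure)
  set w : Bool → ℝ≥0∞ := fun b => if b then 2⁻¹ else 1
  have hw : ∫⁻ b, w b ∂(PMF.bernoulli p hp).toMeasure = 1 - p / 2 := by
    have hp' : (p : ℝ≥0∞) ≤ 1 := ENNReal.coe_le_one_iff.2 hp
    rw [PMF.lintegral_toMeasure_bernoulli]
    simp only [w, if_true, Bool.false_eq_true, if_false, one_mul, ← ENNReal.div_eq_inv_mul]
    refine ENNReal.eq_sub_of_add_eq (by finiteness) ?_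
    rw [add_comm, ← add_assoc, ENNReal.add_halves, add_tsub_cancel_of_le hp']
  have hmgf : ∫⁻ f, ∏ i ∈ S, w (f i) ∂μ = (1 - p / 2) ^ #S := by
    rw [lintegral_prod_eq_prod_lintegral_of_indepFun S (fun i (f : ι → Bool) => w (f i))
      (iIndepFun_pi fun _ => (measurable_of_countable w).aemeasurable)
      fun i => (measurable_of_countable w).comp (measurable_pi_apply i)]
    have hcoord : ∀ i, ∫⁻ f, w (f i) ∂μ = 1 - p / 2 := fun i => by
      rw [← hw]
      exact (measurePreserving_eval _ i).lintegral_comp (measurable_of_countable w)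
    exact (prod_congr rfl fun i _ => hcoord i).trans (prod_const _)
  have hprod : ∀ f : ι → Bool, ∏ i ∈ S, w (f i) = 2⁻¹ ^ #{i ∈ S | f i = true} := fun f => by
    rw [prod_ite, prod_const, prod_const, one_pow, mul_one]
  have hsub : {f : ι → Bool | #{i ∈ S | f i = true} < N} ⊆ {f | 2⁻¹ ^ N ≤ ∏ i ∈ S, w (f i)} :=
    fun f hf => by
      simp only [Set.mem_setOf_eq, hprod] at hf ⊢
      exact pow_le_pow_right_of_le_one' (by norm_num) hf.le
  have markov := mul_meas_ge_le_lintegral₀ (μ := μ)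
    (measurable_of_countable fun f : ι → Bool => ∏ i ∈ S, w (f i)).aemeasurable
    ((2 : ℝ≥0∞)⁻¹ ^ N)
  rw [hmgf] at markov
  calc μ {f | #{i ∈ S | f i = true} < N}
      = 2 ^ N * (2⁻¹ ^ N * μ {f | #{i ∈ S | f i = true} < N}) := by
        rw [← mul_assoc, ← mul_pow, ENNReal.mul_inv_cancel two_ne_zero ENNReal.ofNat_ne_top,
          one_pow, one_mul]
    _ ≤ 2 ^ N * (1 - p / 2) ^ #S := by
        gcongr
        exact (mul_le_mul_right (measure_mono hsub) _).trans markov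

theorem ENNReal.one_sub_half_le_ofReal_exp {p : ℝ≥0} (hp : p ≤ 1) :
    1 - (p : ℝ≥0∞) / 2 ≤ ENNReal.ofReal (Real.exp (-(p / 2))) := by
  have hp2 : (p : ℝ≥0∞) / 2 ≤ 1 := ENNReal.half_le_self.trans (ENNReal.coe_le_one_iff.2 hp)
  rw [ENNReal.le_ofReal_iff_toReal_le (by finiteness) (Real.exp_pos _).le,
    ENNReal.toReal_sub_of_le hp2 ENNReal.one_ne_top, ENNReal.toReal_div]
  simpa [sub_eq_neg_add] using Real.add_one_le_exp (-(p / 2 : ℝ))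

theorem ENNReal.two_pow_mul_one_sub_half_pow_le {p : ℝ≥0} (hp : p ≤ 1) (N n : ℕ) :
    (2 : ℝ≥0∞) ^ N * (1 - p / 2) ^ n ≤ ENNReal.ofReal (Real.exp (N * Real.log 2 - p * n / 2)) := by
  calc (2 : ℝ≥0∞) ^ N * (1 - p / 2) ^ n
      ≤ ENNReal.ofReal (2 ^ N) * ENNReal.ofReal (Real.exp (-(p / 2))) ^ n := by
        rw [ENNReal.ofReal_pow zero_le_two, ENNReal.ofReal_ofNat]
        gcongr
        exact one_sub_half_le_ofReal_exp hp
    _ = ENNReal.ofReal (Real.exp (N * Real.log 2 - p * n / 2)) := by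
        rw [← ENNReal.ofReal_pow (Real.exp_pos _).le, ← ENNReal.ofReal_mul (by positivity),
          ← Real.exp_nat_mul, ← Real.rpow_natCast, Real.rpow_def_of_pos two_pos, ← Real.exp_add]
        ring_nf

theorem measure_pi_bernoulli_card_filter_lt_le_exp {ι : Type*} [Fintype ι] (p : ℝ≥0)
    (hp : p ≤ 1) (S : Finset ι) {t : ℝ} (ht : 0 ≤ t) :
    Measure.pi (fun _ : ι => (PMF.bernoulli p hp).toMeasure)
        {f | (#{i ∈ S | f i = true} : ℝ) < t}
      ≤ ENNReal.ofReal (Real.exp ((t + 1) * Real.log 2 - p * #S / 2)) :=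
  calc _ ≤ Measure.pi (fun _ : ι => (PMF.bernoulli p hp).toMeasure)
          {f | #{i ∈ S | f i = true} < ⌈t⌉₊} := measure_mono fun f hf => Nat.lt_ceil.2 hf
    _ ≤ 2 ^ ⌈t⌉₊ * (1 - p / 2) ^ #S := measure_pi_bernoulli_card_filter_lt_le p hp S _
    _ ≤ ENNReal.ofReal (Real.exp (⌈t⌉₊ * Real.log 2 - p * #S / 2)) :=
        ENNReal.two_pow_mul_one_sub_half_pow_le hp _ _
    _ ≤ ENNReal.ofReal (Real.exp ((t + 1) * Real.log 2 - p * #S / 2)) := by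
        gcongr
        exact (Nat.ceil_lt_add_one ht).le

theorem measure_pi_bernoulli_card_lines_meeting_lt_le {α : Type*} [DecidableEq α]
    {L : Finset (Finset α)} {A : Finset α} {q : ℕ} (hA : #A = q)
    (hdeg : ∀ v ∈ A, #{e ∈ L | v ∈ e} = q)
    (hlin : ∀ u ∈ A, ∀ v ∈ A, u ≠ v → #{e ∈ L | u ∈ e ∧ v ∈ e} ≤ 1)
    (p : ℝ≥0) (hp : p ≤ 1) {t : ℝ} (ht : 0 ≤ t) :
    Measure.pi (fun _ : L => (PMF.bernoulli p hp).toMeasure)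
        {f | (#{e ∈ L.attach | (e.1 ∩ A).Nonempty ∧ f e = true} : ℝ) < t}
      ≤ ENNReal.ofReal (Real.exp ((t + 1) * Real.log 2 - p * q ^ 2 / 4)) := by
  have hS : (q : ℝ) ^ 2 ≤ 2 * #{e ∈ L.attach | (e.1 ∩ A).Nonempty} := by
    have h := sq_le_two_mul_card_filter_inter_nonempty hA hdeg hlin
    simp_rw [inter_comm A] at h
    rw [filter_attach (fun e => (e ∩ A).Nonempty), card_map, card_attach]
    exact_mod_cast h
  simp_rw [← filter_filter]
  refine (measure_pi_bernoulli_card_filter_lt_le_exp p hp _ ht).trans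
    (ENNReal.ofReal_le_ofReal (Real.exp_le_exp.2 ?_))
  nlinarith [p.coe_nonneg]

theorem Nat.cast_choose_sq_le_exp (q : ℕ) :
    ((q ^ 2).choose q : ℝ) ≤ Real.exp (2 * q * Real.log q) := by
  rcases Nat.eq_zero_or_pos q with rfl | hq
  · simp
  calc ((q ^ 2).choose q : ℝ) ≤ ((q ^ 2 : ℕ) : ℝ) ^ q := by exact_mod_cast Nat.choose_le_pow _ _
    _ = Real.exp (2 * q * Real.log q) := by
        rw [show 2 * q * Real.log q = q * Real.log (q ^ 2) by rw [Real.log_pow]; push_cast; ring,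
          Real.exp_nat_mul, Real.exp_log (by positivity), Nat.cast_pow]

theorem exists_choose_sq_mul_exp_le {ε : ℝ} (hε : 0 < ε) :
    ∃ q₀ : ℕ, ∀ q : ℕ, q₀ ≤ q → ((q ^ 2).choose q : ℝ) *
      Real.exp ((Real.log q ^ 2 * q / 4 + 1) * Real.log 2 - Real.log q ^ 2 * q / 4) ≤ ε := by
  refine ⟨⌈max (Real.exp 40) (-Real.log ε)⌉₊, fun q hq => ?_⟩
  have hq_max := Nat.ceil_le.1 hq
  have hq_exp : Real.exp 40 ≤ q := (le_max_left _ _).trans hq_max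
  have hq_one : (1 : ℝ) ≤ q := (Real.one_le_exp (by norm_num)).trans hq_exp
  set L := Real.log q
  have hL : 40 ≤ L := (Real.le_log_iff_exp_le (by linarith)).2 hq_exp
  have hexponent : 2 * q * L + (L ^ 2 * q / 4 + 1) * Real.log 2 - L ^ 2 * q / 4 ≤ -q := by
    have hlog2 : (L ^ 2 * q / 4 + 1) * Real.log 2 ≤ (L ^ 2 * q / 4 + 1) * 0.7 :=
      mul_le_mul_of_nonneg_left (by linarith [Real.log_two_lt_d9]) (by positivity)
    have hLL : 40 * (q * L) ≤ L * (q * L) := mul_le_mul_of_nonneg_right hL (by positivity)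
    have hqL : 40 * q ≤ q * L := by nlinarith
    nlinarith
  calc _ ≤ Real.exp (2 * q * L) *
        Real.exp ((L ^ 2 * q / 4 + 1) * Real.log 2 - L ^ 2 * q / 4) := by
        gcongr
        exact Nat.cast_choose_sq_le_exp q
    _ ≤ Real.exp (Real.log ε) := by
        rw [← Real.exp_add]
        gcongr
        linarith [(le_max_right _ _).trans hq_max]
    _ = ε := Real.exp_log hε

/-- Keep each line of the affine-plane-derived hypergraph on `q²` vertices
independently with probability `α/q`, `α = (log q)²`. Then for every `ε > 0` and
every sufficiently large prime `q`, the probability that some set `A` of `q`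
vertices is intersected by fewer than `αq/4` retained lines is at most `ε`. -/
theorem stmt10 (ε : ℝ) (hε : 0 < ε) :
    ∃ q₀ : ℕ, ∀ q : ℕ, q₀ ≤ q → q.Prime →
    ∀ (Lset : Finset (Finset (Fin (q ^ 2)))),
      (∀ e ∈ Lset, e.card = q) →
      (∀ v : Fin (q ^ 2), (Lset.filter (fun e => v ∈ e)).card = q) →
      (∀ u v : Fin (q ^ 2), u ≠ v → (Lset.filter (fun e => u ∈ e ∧ v ∈ e)).card ≤ 1) →
      ∀ (h : ENNReal.ofReal ((Real.log q) ^ 2 / q) ≤ 1),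
      Measure.pi (fun _ : ↥Lset =>
          (PMF.bernoulli (Real.toNNReal ((Real.log q) ^ 2 / q)) (ENNReal.coe_le_one_iff.mp h)).toMeasure)
        {f : ↥Lset → Bool | ∃ A : Finset (Fin (q ^ 2)), A.card = q ∧
          ((Lset.attach.filter (fun e => (e.1 ∩ A).Nonempty ∧ f e = true)).card : ℝ)
            < (Real.log q) ^ 2 * q / 4}
      ≤ ENNReal.ofReal ε := by
  obtain ⟨q₀, hq₀⟩ := exists_choose_sq_mul_exp_le hε
  refine ⟨q₀, fun q hq hqp Lset _ hdeg hlin h => ?_⟩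
  set t := Real.log q ^ 2 * q / 4 with ht
  set p := (Real.log q ^ 2 / q).toNNReal
  have hpq : (p : ℝ) * q ^ 2 / 4 = t := by
    rw [Real.coe_toNNReal _ (by positivity), ht]
    field_simp [hqp.ne_zero]
  set μ := Measure.pi fun _ : Lset => (PMF.bernoulli p (ENNReal.coe_le_one_iff.mp h)).toMeasure
  let E : Finset (Fin (q ^ 2)) → Set (Lset → Bool) := fun A =>
    {f | (#{e ∈ Lset.attach | (e.1 ∩ A).Nonempty ∧ f e = true} : ℝ) < t}
  calc _ = μ (⋃ A ∈ powersetCard q univ, E A) := by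
        congr 1
        ext f
        simp [E]
    _ ≤ ∑ A ∈ powersetCard q univ, μ (E A) := measure_biUnion_finset_le _ _
    _ ≤ ∑ _A ∈ powersetCard q univ, ENNReal.ofReal (Real.exp ((t + 1) * Real.log 2 - t)) :=
        sum_le_sum fun A hA => (measure_pi_bernoulli_card_lines_meeting_lt_le
          (mem_powersetCard_univ.1 hA) (fun v _ => hdeg v) (fun u _ v _ => hlin u v) p _
          (by positivity : 0 ≤ t)).trans_eq (by rw [hpq])
    _ ≤ ENNReal.ofReal ε := by
        rw [sum_const, card_powersetCard, card_univ, Fintype.card_fin, nsmul_eq_mul,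
          ← ENNReal.ofReal_natCast, ← ENNReal.ofReal_mul (by positivity)]
        exact ENNReal.ofReal_le_ofReal (hq₀ q hq)
end

section
/- For every integer β ≥ 2 and s ≥ 2 with s ≤ β, the complete balanced s-partite graph with parts of size 2β contains at least β² edge-disjoint copies of K_s. -/
/-!
Pick a prime `p` with `β < p ≤ 2β` (Bertrand) and view the parts as points `x ∈ 𝔽_p` and
the vertices of each part as values in `𝔽_p`. Every affine line `x ↦ a + x b` over `𝔽_p`
meets each part in exactly one vertex, so it spans a copy of `K_s`; two distinct lines agree
at most at one point, so their copies share at most one vertex and hence no edge. This gives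
`p² ≥ β²` copies.
-/

open Finset SimpleGraph

section GraphFinset

variable {ι α : Type*} [Fintype ι]

def graphFinset (f : ι → α) : Finset (ι × α) :=
  univ.map ⟨fun i => (i, f i), fun _ _ h => congrArg Prod.fst h⟩

theorem mem_graphFinset {f : ι → α} {z : ι × α} : z ∈ graphFinset f ↔ f z.1 = z.2 := by
  constructor
  · intro h
    obtain ⟨i, -, rfl⟩ := mem_map.mp h
    rfl
  · exact fun h => mem_map.mpr ⟨z.1, mem_univ _, Prod.ext rfl h⟩

theorem card_graphFinset (f : ι → α) : #(graphFinset f) = Fintype.card ι :=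
  card_map _

theorem graphFinset_injective :
    Function.Injective (graphFinset : (ι → α) → Finset (ι × α)) := by
  intro f g h
  funext i
  exact (mem_graphFinset.mp (h ▸ mem_graphFinset.mpr rfl : (i, f i) ∈ graphFinset g)).symm

theorem isNClique_graphFinset (f : ι → α) :
    (fromRel fun a b : ι × α => a.1 ≠ b.1).IsNClique (Fintype.card ι) (graphFinset f) := by
  refine ⟨fun x hx y hy hxy => ?_, card_graphFinset f⟩
  have hfst : x.1 ≠ y.1 := fun h => hxy <| Prod.ext h <| by
    rw [← mem_graphFinset.mp (mem_coe.mp hx), ← mem_graphFinset.mp (mem_coe.mp hy), h]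
  exact (fromRel_adj _ _ _).mpr ⟨hxy, Or.inl hfst⟩

theorem card_inter_graphFinset_le_one [DecidableEq ι] [DecidableEq α] {f g : ι → α}
    (hfg : ∀ i j, i ≠ j → f i = g i → f j = g j → f = g) (hne : f ≠ g) :
    #(graphFinset f ∩ graphFinset g) ≤ 1 := by
  by_contra! hcard
  obtain ⟨z₁, hz₁, z₂, hz₂, hz⟩ := one_lt_card.mp hcard
  rw [mem_inter, mem_graphFinset, mem_graphFinset] at hz₁ hz₂
  have hfst : z₁.1 ≠ z₂.1 := fun h => hz <| Prod.ext h <| by rw [← hz₁.1, ← hz₂.1, h]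
  exact hne (hfg _ _ hfst (hz₁.1.trans hz₁.2.symm) (hz₂.1.trans hz₂.2.symm))

theorem exists_cliques_card_inter_le_one [DecidableEq ι] [DecidableEq α] {κ : Type*} [Fintype κ]
    (g : κ → ι → α)
    (hg : ∀ k k' i j, i ≠ j → g k i = g k' i → g k j = g k' j → k = k')
    (hι : 1 < Fintype.card ι) :
    ∃ C : Finset (Finset (ι × α)), #C = Fintype.card κ ∧
      (∀ T ∈ C, (fromRel fun a b : ι × α => a.1 ≠ b.1).IsNClique (Fintype.card ι) T) ∧
      (∀ T₁ ∈ C, ∀ T₂ ∈ C, T₁ ≠ T₂ → #(T₁ ∩ T₂) ≤ 1) := by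
  obtain ⟨i, j, hij⟩ := Fintype.exists_pair_of_one_lt_card hι
  have hg_inj : Function.Injective g := fun k k' h =>
    hg k k' i j hij (congrFun h i) (congrFun h j)
  refine ⟨univ.image (graphFinset ∘ g), ?_, ?_, ?_⟩
  · rw [card_image_of_injective _ (graphFinset_injective.comp hg_inj), card_univ]
  · simp only [mem_image, mem_univ, true_and, Function.comp_apply]
    rintro _ ⟨k, rfl⟩
    exact isNClique_graphFinset (g k)
  · simp only [mem_image, mem_univ, true_and, Function.comp_apply]
    rintro _ ⟨k, rfl⟩ _ ⟨k', rfl⟩ hne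
    refine card_inter_graphFinset_le_one (fun i j hij hi hj => ?_) fun h => hne (h ▸ rfl)
    rw [hg k k' i j hij hi hj]

end GraphFinset

section AffineLines

variable {F : Type*} [Field F]

theorem eq_of_add_mul_eq_add_mul {a b a' b' x y : F} (hxy : x ≠ y)
    (hx : a + x * b = a' + x * b') (hy : a + y * b = a' + y * b') : a = a' ∧ b = b' := by
  have hb : b = b' := by
    have h : (x - y) * b = (x - y) * b' := by linear_combination hx - hy
    exact mul_left_cancel₀ (sub_ne_zero.mpr hxy) h
  exact ⟨by simpa [hb] using hx, hb⟩

theorem exists_cliques_of_field {ι α : Type*} [Fintype ι] [DecidableEq ι] [DecidableEq α]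
    [Fintype F] (e : ι ↪ F) (v : F ↪ α) (hι : 1 < Fintype.card ι) :
    ∃ C : Finset (Finset (ι × α)), #C = Fintype.card F ^ 2 ∧
      (∀ T ∈ C, (fromRel fun a b : ι × α => a.1 ≠ b.1).IsNClique (Fintype.card ι) T) ∧
      (∀ T₁ ∈ C, ∀ T₂ ∈ C, T₁ ≠ T₂ → #(T₁ ∩ T₂) ≤ 1) := by
  have hlines : ∀ (c c' : F × F) i j, i ≠ j → v (c.1 + e i * c.2) = v (c'.1 + e i * c'.2) →
      v (c.1 + e j * c.2) = v (c'.1 + e j * c'.2) → c = c' := fun c c' i j hij hi hj =>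
    Prod.ext_iff.mpr <|
      eq_of_add_mul_eq_add_mul (e.injective.ne hij) (v.injective hi) (v.injective hj)
  simpa [sq] using
    exists_cliques_card_inter_le_one (fun (c : F × F) i => v (c.1 + e i * c.2)) hlines hι

end AffineLines

theorem stmt12_general (β s : ℕ) (hs2 : 2 ≤ s) (hsβ : s ≤ β) :
    ∃ C : Finset (Finset (Fin s × Fin (2 * β))),
      β ^ 2 ≤ C.card ∧
      (∀ T ∈ C,
        (SimpleGraph.fromRel (fun a b : Fin s × Fin (2 * β) => a.1 ≠ b.1)).IsNClique s T) ∧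
      (∀ T₁ ∈ C, ∀ T₂ ∈ C, T₁ ≠ T₂ → (T₁ ∩ T₂).card ≤ 1) := by
  obtain ⟨p, hp, hβp, hp2β⟩ := Nat.exists_prime_lt_and_le_two_mul β (by omega)
  have : Fact p.Prime := ⟨hp⟩
  obtain ⟨e⟩ : Nonempty (Fin s ↪ ZMod p) :=
    Function.Embedding.nonempty_of_card_le (by simp only [Fintype.card_fin, ZMod.card]; omega)
  obtain ⟨v⟩ : Nonempty (ZMod p ↪ Fin (2 * β)) :=
    Function.Embedding.nonempty_of_card_le (by simpa only [Fintype.card_fin, ZMod.card])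
  obtain ⟨C, hC, hclique, hinter⟩ :=
    exists_cliques_of_field e v (by simp only [Fintype.card_fin]; omega)
  refine ⟨C, ?_, by simpa only [Fintype.card_fin] using hclique, hinter⟩
  rw [hC, ZMod.card]
  exact Nat.pow_le_pow_left hβp.le 2

/-- For `2 ≤ s ≤ β` with `β ≥ 2`, the complete balanced `s`-partite graph with parts
of size `2β` contains at least `β²` edge-disjoint copies of `K_s`. -/
theorem stmt12 (β s : ℕ) (hβ : 2 ≤ β) (hs2 : 2 ≤ s) (hsβ : s ≤ β) :
    ∃ C : Finset (Finset (Fin s × Fin (2 * β))),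
      β ^ 2 ≤ C.card ∧
      (∀ T ∈ C,
        (SimpleGraph.fromRel (fun a b : Fin s × Fin (2 * β) => a.1 ≠ b.1)).IsNClique s T) ∧
      (∀ T₁ ∈ C, ∀ T₂ ∈ C, T₁ ≠ T₂ → (T₁ ∩ T₂).card ≤ 1) :=
  stmt12_general β s hs2 hsβ
end

section
/- Let D be a dependency digraph for events E1, ..., Ek in a probability space (i.e., each Ei is mutually independent of all Ej with (i,j) ∉ D). Suppose there exist reals z1,...,zk with 0 ≤ zi < 1 and Pr(Ei) ≤ zi · ∏_{(i,j)∈D} (1 − zj) for all i. Then Pr(⋂_{i=1}^k complement(Ei)) > 0. -/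
/-!
Write `A_S = ⋂_{j ∈ S} E_jᶜ` and `w_i = zᵢ`. By strong induction on `S` one shows
`Pr(E_i ∩ A_S) ≤ w_i · Pr(A_S)`, the division-free form of `Pr(E_i | A_S) ≤ w_i`. Split `S` into the
neighbours `S₁` of `i` and the rest `S₂`. Independence and the hypothesis on `Pr(E_i)` give
`Pr(E_i ∩ A_S) ≤ Pr(E_i) Pr(A_{S₂}) ≤ w_i ∏_{j ∈ S₁} (1 - w_j) Pr(A_{S₂})`, and adding the events of
`S₁` to `S₂` one at a time, each time applying the induction hypothesis to a proper subset of `S`,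
gives `∏_{j ∈ S₁} (1 - w_j) Pr(A_{S₂}) ≤ Pr(A_S)`. The same peeling with `S₂ = ∅` and `S₁` the whole
index set yields `Pr(⋂ E_iᶜ) ≥ ∏ (1 - w_i) > 0`.
-/

open MeasureTheory ProbabilityTheory Finset
open scoped ENNReal

section LovaszLocalLemma

variable {Ω ι : Type*} [MeasurableSpace Ω] {μ : Measure Ω} {E : ι → Set Ω} {w : ι → ℝ≥0∞}

lemma one_sub_mul_le_measure_compl_inter [IsFiniteMeasure μ] {A X : Set Ω}
    (hA : MeasurableSet A) {c : ℝ≥0∞} (h : μ (A ∩ X) ≤ c * μ X) :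
    (1 - c) * μ X ≤ μ (Aᶜ ∩ X) := by
  have hsplit : μ (X ∩ A) + μ (X \ A) = μ X := measure_inter_add_sdiff X hA
  calc (1 - c) * μ X = μ X - c * μ X := by
        rw [ENNReal.sub_mul fun _ _ => measure_ne_top μ X, one_mul]
    _ ≤ μ X - μ (X ∩ A) := tsub_le_tsub_left (by rwa [Set.inter_comm]) _
    _ ≤ μ (Aᶜ ∩ X) := by
        rw [tsub_le_iff_right, ← hsplit, add_comm, Set.sdiff_eq, Set.inter_comm X]

lemma measure_inter_biInter_compl_eq_of_indep {D : ι → ι → Prop} {i : ι}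
    (hindep : Indep (MeasurableSpace.generateFrom {E i})
      (MeasurableSpace.generateFrom {A | ∃ j, j ≠ i ∧ ¬ D i j ∧ A = E j}) μ)
    {S : Finset ι} (hS : ∀ j ∈ S, j ≠ i ∧ ¬ D i j) :
    μ (E i ∩ ⋂ j ∈ S, (E j)ᶜ) = μ (E i) * μ (⋂ j ∈ S, (E j)ᶜ) :=
  (Indep_iff _ _ μ).mp hindep _ _ (MeasurableSpace.measurableSet_generateFrom rfl) <|
    S.measurableSet_biInter fun j hj =>
      (MeasurableSpace.measurableSet_generateFrom (show E j ∈ {A | ∃ j, j ≠ i ∧ ¬ D i j ∧ A = E j}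
        from ⟨j, (hS j hj).1, (hS j hj).2, rfl⟩)).compl

variable [DecidableEq ι]

lemma prod_one_sub_mul_measure_le_measure_biInter_compl [IsFiniteMeasure μ]
    (hE : ∀ i, MeasurableSet (E i)) (R T : Finset ι)
    (h : ∀ a ∈ T, ∀ U ⊆ T, a ∉ U →
      μ (E a ∩ ⋂ j ∈ R ∪ U, (E j)ᶜ) ≤ w a * μ (⋂ j ∈ R ∪ U, (E j)ᶜ)) :
    (∏ j ∈ T, (1 - w j)) * μ (⋂ j ∈ R, (E j)ᶜ) ≤ μ (⋂ j ∈ R ∪ T, (E j)ᶜ) := by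
  induction T using Finset.induction with
  | empty => simp
  | @insert a T ha ih =>
    have ih' := ih fun b hb U hU hbU =>
      h b (mem_insert_of_mem hb) U (hU.trans (subset_insert a T)) hbU
    calc (∏ j ∈ insert a T, (1 - w j)) * μ (⋂ j ∈ R, (E j)ᶜ)
        = (1 - w a) * ((∏ j ∈ T, (1 - w j)) * μ (⋂ j ∈ R, (E j)ᶜ)) := by
          rw [prod_insert ha, mul_assoc]
      _ ≤ (1 - w a) * μ (⋂ j ∈ R ∪ T, (E j)ᶜ) := by gcongr
      _ ≤ μ ((E a)ᶜ ∩ ⋂ j ∈ R ∪ T, (E j)ᶜ) :=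
          one_sub_mul_le_measure_compl_inter (hE a)
            (h a (mem_insert_self a T) T (subset_insert a T) ha)
      _ = μ (⋂ j ∈ R ∪ insert a T, (E j)ᶜ) := by rw [union_insert, set_biInter_insert]

lemma measure_iInter_compl_pos [IsProbabilityMeasure μ] [Fintype ι]
    (hE : ∀ i, MeasurableSet (E i)) (hw : ∀ i, w i < 1)
    (h : ∀ i (S : Finset ι), μ (E i ∩ ⋂ j ∈ S, (E j)ᶜ) ≤ w i * μ (⋂ j ∈ S, (E j)ᶜ)) :
    0 < μ (⋂ i, (E i)ᶜ) := by
  have hpeel := prod_one_sub_mul_measure_le_measure_biInter_compl hE ∅ univ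
    fun a _ U _ _ => by simpa using h a U
  simp only [notMem_empty, Set.iInter_of_empty, Set.iInter_univ, measure_univ, mul_one,
    empty_union, mem_univ, Set.iInter_true] at hpeel
  have hprod : 0 < ∏ j, (1 - w j) :=
    pos_iff_ne_zero.2 (prod_ne_zero_iff.2 fun j _ => (tsub_pos_of_lt (hw j)).ne')
  exact hprod.trans_le hpeel

lemma measure_inter_biInter_compl_le [IsFiniteMeasure μ] [Fintype ι]
    (hE : ∀ i, MeasurableSet (E i)) (D : ι → ι → Prop) [DecidableRel D]
    (hfac : ∀ i (S : Finset ι), (∀ j ∈ S, j ≠ i ∧ ¬ D i j) →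
      μ (E i ∩ ⋂ j ∈ S, (E j)ᶜ) ≤ μ (E i) * μ (⋂ j ∈ S, (E j)ᶜ))
    (hbound : ∀ i, μ (E i) ≤ w i * ∏ j ∈ univ.filter (fun j => D i j), (1 - w j))
    (i : ι) (S : Finset ι) :
    μ (E i ∩ ⋂ j ∈ S, (E j)ᶜ) ≤ w i * μ (⋂ j ∈ S, (E j)ᶜ) := by
  induction S using Finset.strongInduction generalizing i with
  | H S ih =>
  by_cases hiS : i ∈ S
  · have hempty : E i ∩ ⋂ j ∈ S, (E j)ᶜ = ∅ :=
      Set.eq_empty_of_forall_notMem fun x hx => Set.mem_iInter₂.1 hx.2 i hiS hx.1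
    simp [hempty]
  set S₁ := S.filter (fun j => D i j)
  set S₂ := S.filter (fun j => ¬ D i j)
  have hpeel : (∏ j ∈ S₁, (1 - w j)) * μ (⋂ j ∈ S₂, (E j)ᶜ) ≤ μ (⋂ j ∈ S, (E j)ᶜ) := by
    have hS : S₂ ∪ S₁ = S := by rw [union_comm, filter_union_filter_not_eq]
    refine hS ▸ prod_one_sub_mul_measure_le_measure_biInter_compl hE S₂ S₁ ?_
    intro a ha U hU haU
    refine ih _ ((ssubset_iff_of_subset ?_).2 ⟨a, (mem_filter.1 ha).1, ?_⟩) a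
    · exact union_subset (filter_subset _ S) (hU.trans (filter_subset _ S))
    · simp [S₂, haU, (mem_filter.1 ha).2]
  calc μ (E i ∩ ⋂ j ∈ S, (E j)ᶜ)
      ≤ μ (E i ∩ ⋂ j ∈ S₂, (E j)ᶜ) := measure_mono <| Set.inter_subset_inter_right _ <|
        Set.biInter_subset_biInter_left (filter_subset _ S)
    _ ≤ μ (E i) * μ (⋂ j ∈ S₂, (E j)ᶜ) := hfac i S₂ fun j hj =>
        ⟨fun hji => hiS (hji ▸ (mem_filter.1 hj).1), (mem_filter.1 hj).2⟩
    _ ≤ w i * (∏ j ∈ S₁, (1 - w j)) * μ (⋂ j ∈ S₂, (E j)ᶜ) := by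
        gcongr
        refine (hbound i).trans (mul_le_mul_right ?_ _)
        exact prod_le_prod_of_subset_of_le_one'
          (filter_subset_filter (fun j => D i j) (subset_univ S)) fun j _ _ => tsub_le_self
    _ ≤ w i * μ (⋂ j ∈ S, (E j)ᶜ) := by
        rw [mul_assoc]
        gcongr

end LovaszLocalLemma

/-- The general (asymmetric) Lovász Local Lemma. `D` is a dependency digraph for the
events `E i`: each `E i` is mutually independent of all the events `E j` with
`(i,j) ∉ D`. If there are reals `0 ≤ zᵢ < 1` with
`Pr(Eᵢ) ≤ zᵢ · ∏_{(i,j)∈D} (1 − zⱼ)`, then with positive probability no `Eᵢ` occurs. -/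
theorem stmt19 {Ω : Type} [MeasurableSpace Ω] (μ : MeasureTheory.Measure Ω)
    [MeasureTheory.IsProbabilityMeasure μ]
    (k : ℕ) (E : Fin k → Set Ω) (hmeas : ∀ i, MeasurableSet (E i))
    (D : Fin k → Fin k → Prop) [DecidableRel D]
    (hindep : ∀ i : Fin k,
      ProbabilityTheory.Indep
        (MeasurableSpace.generateFrom {E i})
        (MeasurableSpace.generateFrom {A : Set Ω | ∃ j : Fin k, j ≠ i ∧ ¬ D i j ∧ A = E j})
        μ)
    (z : Fin k → ℝ) (hz0 : ∀ i, 0 ≤ z i) (hz1 : ∀ i, z i < 1)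
    (hbound : ∀ i, μ (E i) ≤ ENNReal.ofReal
      (z i * ∏ j ∈ Finset.univ.filter (fun j => D i j), (1 - z j))) :
    0 < μ (⋂ i, (E i)ᶜ) := by
  set w : Fin k → ℝ≥0∞ := fun i => ENNReal.ofReal (z i)
  have hbound' : ∀ i, μ (E i) ≤ w i * ∏ j ∈ univ.filter (fun j => D i j), (1 - w j) := by
    intro i
    refine (hbound i).trans_eq ?_
    rw [ENNReal.ofReal_mul (hz0 i),
      ENNReal.ofReal_prod_of_nonneg fun j _ => sub_nonneg.2 (hz1 j).le]
    refine congrArg _ (prod_congr rfl fun j _ => ?_)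
    rw [ENNReal.ofReal_sub 1 (hz0 j), ENNReal.ofReal_one]
  exact measure_iInter_compl_pos hmeas (fun i => ENNReal.ofReal_lt_one.mpr (hz1 i))
    (measure_inter_biInter_compl_le hmeas D
      (fun i _ hS => (measure_inter_biInter_compl_eq_of_indep (hindep i) hS).le) hbound')
end
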